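/- Let ⟪-,-⟫ be a double (12)-weak Poisson bracket on A associated with the right bimodule structure, and let n ≥ 1. Then there is a unique antisymmetric bilinear operation {-,-} on k[Rep(A,n)] which is a biderivation (a derivation in each argument) and satisfies {a_{ij}, b_{kl}} = ⟪a,b⟫'_{ij}·⟪a,b⟫''_{kl} for all a,b ∈ A and 1 ≤ i,j,k,l ≤ n; this operation is a Poisson bracket; and it restricts to a Poisson bracket on the subalgebra k[Rep(A,n)]^{tr} generated by the trace functions tr X(a) = Σ_{i=1}^n a_{ii}, a ∈ A. -/

import Mathlib

open scoped TensorProduct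

noncomputable section

/-- A (`k`-linear) `A`-bimodule-type structure on a `k`-module `M`,
given by a three-slot action `a · d · b`. -/
structure BimodOn (k A M : Type*) [CommSemiring k] [Ring A] [Algebra k A]
    [AddCommMonoid M] [Module k M] where
  act : A → M → A → M
  add_left : ∀ (a a' : A) (d : M) (b : A), act (a + a') d b = act a d b + act a' d b
  add_mid : ∀ (a : A) (d d' : M) (b : A), act a (d + d') b = act a d b + act a d' b
  add_right : ∀ (a : A) (d : M) (b b' : A), act a d (b + b') = act a d b + act a d b'
  smul_left : ∀ (c : k) (a : A) (d : M) (b : A), act (c • a) d b = c • act a d b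
  smul_mid : ∀ (c : k) (a : A) (d : M) (b : A), act a (c • d) b = c • act a d b
  smul_right : ∀ (c : k) (a : A) (d : M) (b : A), act a d (c • b) = c • act a d b
  act_one_one : ∀ d : M, act 1 d 1 = d
  act_mul : ∀ (a a' : A) (d : M) (b b' : A), act a (act a' d b') b = act (a * a') d (b' * b)

/-- An `A`-bimodule structure on `A ⊗[k] A`. -/
abbrev BimodStr (k A : Type*) [CommSemiring k] [Ring A] [Algebra k A] :=
  BimodOn k A (A ⊗[k] A)

section Defs

variable (k A : Type*) [CommSemiring k] [Ring A] [Algebra k A]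

/-- The swap automorphism `°` of `A ⊗[k] A`, `a ⊗ b ↦ b ⊗ a`. -/
def swapT : A ⊗[k] A →ₗ[k] A ⊗[k] A := (TensorProduct.comm k A A).toLinearMap

variable {k A}

namespace BimodOn

/-- The swap bimodule structure `a * d * b = (a · d° · b)°` associated with a
bimodule structure on `A ⊗[k] A`. -/
def star (S : BimodStr k A) (a : A) (d : A ⊗[k] A) (b : A) : A ⊗[k] A :=
  swapT k A (S.act a (swapT k A d) b)

/-- A bimodule structure on `A ⊗[k] A` is swap-commuting if it commutes with its
swap bimodule structure. -/
def SwapCommuting (S : BimodStr k A) : Prop :=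
  ∀ (a₁ a₂ b₁ b₂ : A) (d : A ⊗[k] A),
    S.act a₁ (S.star a₂ d b₂) b₁ = S.star a₂ (S.act a₁ d b₁) b₂

end BimodOn

end Defs

/-- A double bracket on `A` associated with a bimodule structure `S` on `A ⊗[k] A`
(with swap bimodule structure `S.star`). -/
structure DoubleBracket {k A : Type*} [CommSemiring k] [Ring A] [Algebra k A]
    (S : BimodStr k A) where
  br : A →ₗ[k] A →ₗ[k] A ⊗[k] A
  antisymm : ∀ a b : A, br a b = - swapT k A (br b a)
  leibniz_right : ∀ a b c : A, br a (b * c) = S.act b (br a c) 1 + S.act 1 (br a b) c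
  leibniz_left : ∀ a b c : A, br (b * c) a = S.star b (br c a) 1 + S.star 1 (br b a) c

section Taus

variable (k A : Type*) [CommSemiring k] [Ring A] [Algebra k A]

/-- `τ_{(123)}` on `A^{⊗3}`: `a ⊗ b ⊗ c ↦ c ⊗ a ⊗ b`. -/
def tau123 : (A ⊗[k] A) ⊗[k] A →ₗ[k] (A ⊗[k] A) ⊗[k] A :=
  ((TensorProduct.comm k (A ⊗[k] A) A).trans (TensorProduct.assoc k A A A).symm).toLinearMap

/-- `τ_{(132)}` on `A^{⊗3}`: `a ⊗ b ⊗ c ↦ b ⊗ c ⊗ a`. -/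
def tau132 : (A ⊗[k] A) ⊗[k] A →ₗ[k] (A ⊗[k] A) ⊗[k] A :=
  ((TensorProduct.assoc k A A A).trans (TensorProduct.comm k A (A ⊗[k] A))).toLinearMap

/-- `τ_{(12)}` on `A^{⊗3}`: `a ⊗ b ⊗ c ↦ b ⊗ a ⊗ c`. -/
def tau12 : (A ⊗[k] A) ⊗[k] A →ₗ[k] (A ⊗[k] A) ⊗[k] A :=
  (TensorProduct.congr (TensorProduct.comm k A A) (LinearEquiv.refl k A)).toLinearMap

variable {k A}

/-- `⟪a, -⟫_L : A ⊗ A → A ⊗ A ⊗ A`, `b₁ ⊗ b₂ ↦ ⟪a, b₁⟫ ⊗ b₂`. -/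
def trL (br : A →ₗ[k] A →ₗ[k] A ⊗[k] A) (a : A) :
    A ⊗[k] A →ₗ[k] (A ⊗[k] A) ⊗[k] A :=
  TensorProduct.map (br a) LinearMap.id

/-- The double Jacobiator of a bilinear operation `A × A → A ⊗ A`:
`⟪a,b,c⟫ = ⟪a,⟪b,c⟫⟫_L + τ_{(123)} ⟪b,⟪c,a⟫⟫_L + τ_{(132)} ⟪c,⟪a,b⟫⟫_L`. -/
def jac (br : A →ₗ[k] A →ₗ[k] A ⊗[k] A) (a b c : A) : (A ⊗[k] A) ⊗[k] A :=
  trL br a (br b c) + tau123 k A (trL br b (br c a)) + tau132 k A (trL br c (br a b))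

end Taus

end

/-- The `(i,j)` matrix entry as a `k`-linear map. -/
noncomputable def matEntry {k R : Type*} [CommSemiring k] [CommRing R] [Algebra k R]
    {n : ℕ} (i j : Fin n) : Matrix (Fin n) (Fin n) R →ₗ[k] R where
  toFun M := M i j
  map_add' := by intro M N; simp
  map_smul' := by intro c M; simp

/-- For `d ∈ A ⊗ A`, the function `d_{ij,kl} = d'_{ij} d''_{kl}` on the representation
space, expressed through the universal matrix representation `X`. -/
noncomputable def entPair {k A R : Type*} [CommRing k] [Ring A] [Algebra k A]
    [CommRing R] [Algebra k R] {n : ℕ}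
    (X : A →ₐ[k] Matrix (Fin n) (Fin n) R) (i j l m : Fin n) :
    A ⊗[k] A →ₗ[k] R :=
  TensorProduct.lift ((LinearMap.mul k R).compl₁₂
    ((matEntry i j).comp X.toLinearMap) ((matEntry l m).comp X.toLinearMap))

universe u

/-!
A biderivation of `k[Rep(A,n)]` is determined by its values on the generators `a_{ij}`.
For existence, the universal property identifies derivations `k[Rep(A,n)] → M` with lifts of the
universal representation to matrices over the square-zero extension `k[Rep(A,n)] ⊕ M`; the two
Leibniz rules of the double bracket for the right bimodule structure say precisely that
`b_{lm} ↦ ⟪a,b⟫_{ij,lm}`, and then `a_{ij} ↦ {a_{ij}, -}`, give such lifts.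
Everything else is checked on generators. Antisymmetry comes from `⟪a,b⟫ = -⟪b,a⟫°`. The Jacobiator
of an antisymmetric biderivation is a derivation in each argument, and on generators it equals
`⟪a,b,c⟫_{ij,lm,pq} - ⟪a,c,b⟫_{ij,pq,lm}`, which vanishes because the bracket is (12)-weak Poisson.
Finally `{tr a, tr b} = Σ ⟪a,b⟫_{ii,jj} = tr ⟪a,b⟫' · tr ⟪a,b⟫''`.
-/

section UniversalRep

universe v

variable {k A : Type*} {R : Type v} [CommRing k] [Ring A] [Algebra k A] [CommRing R]
  [Algebra k R] {n : ℕ}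

/-- `X` is a universal `n`-dimensional representation: `R = k[Rep(A,n)]`. -/
def IsUniversalRep (X : A →ₐ[k] Matrix (Fin n) (Fin n) R) : Prop :=
  ∀ (C : Type v) [CommRing C] [Algebra k C] (ρ : A →ₐ[k] Matrix (Fin n) (Fin n) C),
    ∃! g : R →ₐ[k] C, ∀ (a : A) (i j : Fin n), g (X a i j) = ρ a i j

def matrixEntries (X : A →ₐ[k] Matrix (Fin n) (Fin n) R) : Set R :=
  Set.range fun t : A × Fin n × Fin n => X t.1 t.2.1 t.2.2

variable {X : A →ₐ[k] Matrix (Fin n) (Fin n) R}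

theorem IsUniversalRep.algHom_ext (hX : IsUniversalRep X) {C : Type v} [CommRing C]
    [Algebra k C] {f g : R →ₐ[k] C} (h : ∀ (a : A) (i j : Fin n), f (X a i j) = g (X a i j)) :
    f = g := by
  obtain ⟨_, -, huniq⟩ := hX C (g.mapMatrix.comp X)
  exact (huniq f h).trans (huniq g fun _ _ _ => rfl).symm

theorem IsUniversalRep.adjoin_matrixEntries (hX : IsUniversalRep X) :
    Algebra.adjoin k (matrixEntries X) = ⊤ := by
  set T := Algebra.adjoin k (matrixEntries X)
  have hmem (a : A) (i j : Fin n) : X a i j ∈ T := Algebra.subset_adjoin ⟨(a, i, j), rfl⟩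
  let ρ : A →ₐ[k] Matrix (Fin n) (Fin n) T := AlgHom.ofLinearMap
    { toFun a := Matrix.of fun i j => ⟨X a i j, hmem a i j⟩
      map_add' a b := by ext; simp
      map_smul' c a := by ext; simp }
    (by ext i j; by_cases hij : i = j <;> simp [Matrix.one_apply, hij])
    (fun a b => by ext i j; simp [Matrix.mul_apply])
  obtain ⟨g, hg, -⟩ := hX T ρ
  have hsection : T.val.comp g = AlgHom.id k R :=
    hX.algHom_ext fun a i j => congrArg Subtype.val (hg a i j)
  refine eq_top_iff.2 fun x _ => ?_
  have hx : T.val (g x) = x := DFunLike.congr_fun hsection x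
  exact hx ▸ (g x).2

theorem IsUniversalRep.exists_derivation (hX : IsUniversalRep X) {M : Type v}
    [AddCommGroup M] [Module k M] [Module R M] [Module Rᵐᵒᵖ M] [IsCentralScalar R M]
    [IsScalarTower k R M] (w : A →ₗ[k] Matrix (Fin n) (Fin n) M)
    (hw : ∀ (a b : A) (i j : Fin n),
      w (a * b) i j = ∑ p, (X a i p • w b p j + X b p j • w a i p)) :
    ∃ Δ : Derivation k R M, ∀ (a : A) (i j : Fin n), Δ (X a i j) = w a i j := by
  have hw1 : w 1 = 0 := by
    ext i j
    simpa [Matrix.one_apply, Finset.sum_add_distrib] using hw 1 1 i j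
  let ρ : A →ₐ[k] Matrix (Fin n) (Fin n) (TrivSqZeroExt R M) := AlgHom.ofLinearMap
    { toFun a := Matrix.of fun i j => .inl (X a i j) + .inr (w a i j)
      map_add' a b := by ext <;> simp [add_add_add_comm]
      map_smul' c a := by ext <;> simp }
    (by ext i j <;> by_cases hij : i = j <;> simp [Matrix.one_apply, hij, hw1])
    (fun a b => by
      ext i j <;> simp [Matrix.mul_apply, hw, TrivSqZeroExt.fst_sum, TrivSqZeroExt.snd_sum])
  obtain ⟨g, hg, -⟩ := hX _ ρ
  have hfst : (TrivSqZeroExt.fstHom k R M).comp g = AlgHom.id k R :=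
    hX.algHom_ext fun a i j => by simp [hg, ρ]
  refine ⟨Derivation.mk' (((TrivSqZeroExt.sndHom R M).restrictScalars k).comp g.toLinearMap)
    fun x y => ?_, fun a i j => by simp [hg, ρ]⟩
  have hfst' (z : R) : (g z).fst = z := DFunLike.congr_fun hfst z
  simp [TrivSqZeroExt.snd_mul, hfst']

end UniversalRep

section Biderivation

variable {k R : Type*} [CommRing k] [CommRing R] [Algebra k R]

structure IsBiderivation (P : R →ₗ[k] R →ₗ[k] R) : Prop where
  leibniz_right : ∀ x y z : R, P x (y * z) = y * P x z + P x y * z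
  leibniz_left : ∀ x y z : R, P (x * y) z = x * P y z + y * P x z

namespace IsBiderivation

variable {P Q : R →ₗ[k] R →ₗ[k] R}

def rightDerivation (hP : IsBiderivation P) (x : R) : Derivation k R R :=
  Derivation.mk' (P x) fun y z => by rw [hP.leibniz_right, smul_eq_mul, smul_eq_mul]; ring

def leftDerivation (hP : IsBiderivation P) (z : R) : Derivation k R R :=
  Derivation.mk' (P.flip z) fun x y => by simp [hP.leibniz_left]

theorem apply_one_right (hP : IsBiderivation P) (x : R) : P x 1 = 0 :=
  (hP.rightDerivation x).map_one_eq_zero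

theorem apply_one_left (hP : IsBiderivation P) (y : R) : P 1 y = 0 :=
  (hP.leftDerivation y).map_one_eq_zero

theorem neg_flip (hP : IsBiderivation P) : IsBiderivation (-P.flip) where
  leibniz_right x y z := by
    simp only [LinearMap.neg_apply, LinearMap.flip_apply, hP.leibniz_left]; ring
  leibniz_left x y z := by
    simp only [LinearMap.neg_apply, LinearMap.flip_apply, hP.leibniz_right]; ring

variable {s : Set R}

theorem ext_of_adjoin_eq_top (hP : IsBiderivation P) (hQ : IsBiderivation Q)
    (hs : Algebra.adjoin k s = ⊤) (h : ∀ x ∈ s, ∀ y ∈ s, P x y = Q x y) : P = Q := by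
  have hleft (x : R) (hx : x ∈ s) : P x = Q x := LinearMap.ext fun y =>
    DFunLike.congr_fun (Derivation.ext_of_adjoin_eq_top (D1 := hP.rightDerivation x)
      (D2 := hQ.rightDerivation x) s hs (h x hx)) y
  refine LinearMap.ext fun x => LinearMap.ext fun y => ?_
  exact DFunLike.congr_fun (Derivation.ext_of_adjoin_eq_top (D1 := hP.leftDerivation y)
    (D2 := hQ.leftDerivation y) s hs fun x hx => LinearMap.congr_fun (hleft x hx) y) x

theorem antisymm_of_adjoin_eq_top (hP : IsBiderivation P) (hs : Algebra.adjoin k s = ⊤)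
    (h : ∀ x ∈ s, ∀ y ∈ s, P x y = -P y x) (x y : R) : P x y = -P y x :=
  LinearMap.congr_fun₂ (hP.ext_of_adjoin_eq_top hP.neg_flip hs h) x y

theorem jacobi_of_adjoin_eq_top (hP : IsBiderivation P) (hanti : ∀ x y, P x y = -P y x)
    (hs : Algebra.adjoin k s = ⊤)
    (h : ∀ x ∈ s, ∀ y ∈ s, ∀ z ∈ s, P x (P y z) + P y (P z x) + P z (P x y) = 0)
    (x y z : R) : P x (P y z) + P y (P z x) + P z (P x y) = 0 := by
  -- the Jacobiator is a derivation in its last argument, thanks to antisymmetry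
  let J (x y : R) : Derivation k R R :=
    Derivation.mk' ((P x).comp (P y) + (P y).comp (P.flip x) + P.flip (P x y)) fun z w => by
      simp only [LinearMap.add_apply, LinearMap.comp_apply, LinearMap.flip_apply, smul_eq_mul]
      rw [hP.leibniz_right y z w, hP.leibniz_left z w x, hP.leibniz_left z w (P x y), map_add,
        map_add, hP.leibniz_right x z (P y w), hP.leibniz_right x (P y z) w,
        hP.leibniz_right y z (P w x), hP.leibniz_right y w (P z x), hanti w x, hanti z x]
      simp only [map_neg]
      ring
  have hJ (x y z : R) : J x y z = P x (P y z) + P y (P z x) + P z (P x y) := rfl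
  have hcycle (x y z : R) : J x y z = J y z x := by simp only [hJ]; abel
  have hvanish (x y : R) (h : ∀ z ∈ s, J x y z = 0) (z : R) : J x y z = 0 :=
    DFunLike.congr_fun (Derivation.ext_of_adjoin_eq_top (D2 := 0) s hs h) z
  have hJ_mem_mem (x : R) (hx : x ∈ s) (y : R) (hy : y ∈ s) (z : R) : J x y z = 0 :=
    hvanish x y (fun z hz => h x hx y hy z hz) z
  have hJ_mem (x : R) (hx : x ∈ s) (y z : R) : J x y z = 0 := by
    rw [← hcycle z x y]
    exact hvanish z x (fun y hy => by rw [hcycle]; exact hJ_mem_mem x hx y hy z) y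
  rw [← hJ, hcycle]
  exact hvanish y z (fun x hx => by rw [← hcycle]; exact hJ_mem x hx y z) x

theorem mem_adjoin (hP : IsBiderivation P) {t : Set R}
    (h : ∀ x ∈ t, ∀ y ∈ t, P x y ∈ Algebra.adjoin k t) {x y : R}
    (hx : x ∈ Algebra.adjoin k t) (hy : y ∈ Algebra.adjoin k t) :
    P x y ∈ Algebra.adjoin k t := by
  have hgen (x : R) (hx : x ∈ t) : P x y ∈ Algebra.adjoin k t := by
    induction hy using Algebra.adjoin_induction with
    | mem y hy => exact h x hx y hy
    | algebraMap c =>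
      rw [Algebra.algebraMap_eq_smul_one, map_smul, hP.apply_one_right, smul_zero]
      exact zero_mem _
    | add y z _ _ hPy hPz => rw [map_add]; exact add_mem hPy hPz
    | mul y z hy hz hPy hPz =>
      rw [hP.leibniz_right]; exact add_mem (mul_mem hy hPz) (mul_mem hPy hz)
  induction hx using Algebra.adjoin_induction with
  | mem x hx => exact hgen x hx
  | algebraMap c =>
    rw [Algebra.algebraMap_eq_smul_one, map_smul, LinearMap.smul_apply, hP.apply_one_left,
      smul_zero]
    exact zero_mem _
  | add x x' _ _ hPx hPx' => rw [map_add, LinearMap.add_apply]; exact add_mem hPx hPx'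
  | mul x x' hx hx' hPx hPx' =>
    rw [hP.leibniz_left]; exact add_mem (mul_mem hx hPx') (mul_mem hx' hPx)

end IsBiderivation

end Biderivation

section RepresentationFunctions

variable {k A R : Type*} [CommRing k] [Ring A] [Algebra k A] [CommRing R] [Algebra k R]
  {n : ℕ} (X : A →ₐ[k] Matrix (Fin n) (Fin n) R) (i j l m : Fin n)

theorem entPair_tmul (u v : A) : entPair X i j l m (u ⊗ₜ[k] v) = X u i j * X v l m := rfl

theorem entPair_swapT (d : A ⊗[k] A) : entPair X i j l m (swapT k A d) = entPair X l m i j d :=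
  LinearMap.congr_fun (f := (entPair X i j l m).comp (swapT k A)) (g := entPair X l m i j)
    (TensorProduct.ext' fun _ _ => mul_comm _ _) d

theorem entPair_one_tmul_mul (b : A) (d : A ⊗[k] A) :
    entPair X i j l m ((1 ⊗ₜ[k] b) * d) = ∑ p, X b l p * entPair X i j p m d := by
  induction d using TensorProduct.induction_on with
  | zero => simp
  | tmul u v => simp [entPair_tmul, Matrix.mul_apply, Finset.mul_sum, mul_left_comm]
  | add d d' hd hd' => simp [mul_add, hd, hd', Finset.sum_add_distrib]

theorem entPair_mul_one_tmul (c : A) (d : A ⊗[k] A) :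
    entPair X i j l m (d * (1 ⊗ₜ[k] c)) = ∑ p, entPair X i j l p d * X c p m := by
  induction d using TensorProduct.induction_on with
  | zero => simp
  | tmul u v => simp [entPair_tmul, Matrix.mul_apply, Finset.mul_sum, mul_assoc]
  | add d d' hd hd' => simp [add_mul, hd, hd', Finset.sum_add_distrib]

theorem entPair_tmul_one_mul (b : A) (d : A ⊗[k] A) :
    entPair X i j l m ((b ⊗ₜ[k] 1) * d) = ∑ p, X b i p * entPair X p j l m d := by
  induction d using TensorProduct.induction_on with
  | zero => simp
  | tmul u v => simp [entPair_tmul, Matrix.mul_apply, Finset.sum_mul, mul_assoc]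
  | add d d' hd hd' => simp [mul_add, hd, hd', Finset.sum_add_distrib]

theorem entPair_mul_tmul_one (c : A) (d : A ⊗[k] A) :
    entPair X i j l m (d * (c ⊗ₜ[k] 1)) = ∑ p, entPair X i p l m d * X c p j := by
  induction d using TensorProduct.induction_on with
  | zero => simp
  | tmul u v => simp [entPair_tmul, Matrix.mul_apply, Finset.sum_mul, mul_right_comm]
  | add d d' hd hd' => simp [add_mul, hd, hd', Finset.sum_add_distrib]

end RepresentationFunctions

namespace BimodOn

variable {k A : Type*} [CommSemiring k] [Ring A] [Algebra k A]

def IsRight (S : BimodStr k A) : Prop :=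
  ∀ (a b : A) (d : A ⊗[k] A), S.act a d b = ((1 : A) ⊗ₜ[k] a) * d * ((1 : A) ⊗ₜ[k] b)

theorem IsRight.star_eq {S : BimodStr k A} (hS : S.IsRight) (a b : A) (d : A ⊗[k] A) :
    S.star a d b = (a ⊗ₜ[k] (1 : A)) * d * (b ⊗ₜ[k] (1 : A)) := by
  change Algebra.TensorProduct.comm k A A (S.act a (TensorProduct.comm k A A d) b) = _
  rw [hS, map_mul, map_mul, Algebra.TensorProduct.comm_tmul, Algebra.TensorProduct.comm_tmul]
  exact congrArg (_ * · * _) (TensorProduct.comm_comm k A A d)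

end BimodOn

section Brackets

variable {k A R : Type*} [CommRing k] [Ring A] [Algebra k A] [CommRing R] [Algebra k R]
  {n : ℕ} {X : A →ₐ[k] Matrix (Fin n) (Fin n) R} {S : BimodStr k A}

theorem DoubleBracket.swapT_br (D : DoubleBracket S) (a b : A) :
    swapT k A (D.br a b) = -D.br b a := by
  rw [D.antisymm a b, map_neg]
  exact congrArg Neg.neg (TensorProduct.comm_comm k A A _)

variable (i j l m : Fin n)

theorem entPair_br_mul_right (hS : S.IsRight) (D : DoubleBracket S) (a b c : A) :
    entPair X i j l m (D.br a (b * c)) =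
      ∑ p, (X b l p * entPair X i j p m (D.br a c) + X c p m * entPair X i j l p (D.br a b)) := by
  rw [D.leibniz_right, hS, hS, ← Algebra.TensorProduct.one_def, mul_one, one_mul, map_add,
    entPair_one_tmul_mul, entPair_mul_one_tmul, ← Finset.sum_add_distrib]
  simp only [mul_comm (X c _ m)]

theorem entPair_br_mul_left (hS : S.IsRight) (D : DoubleBracket S) (a b c : A) :
    entPair X i j l m (D.br (a * b) c) =
      ∑ p, (X a i p * entPair X p j l m (D.br b c) + X b p j * entPair X i p l m (D.br a c)) := by
  rw [D.leibniz_left, hS.star_eq, hS.star_eq, ← Algebra.TensorProduct.one_def, mul_one, one_mul,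
    map_add, entPair_tmul_one_mul, entPair_mul_tmul_one, ← Finset.sum_add_distrib]
  simp only [mul_comm (X b _ j)]

theorem exists_derivation_entPair_br (hS : S.IsRight) (D : DoubleBracket S)
    (hX : IsUniversalRep X) (a : A) :
    ∃ δ : Derivation k R R, ∀ (b : A) (l m : Fin n), δ (X b l m) = entPair X i j l m (D.br a b) :=
  hX.exists_derivation
    { toFun b := Matrix.of fun l m => entPair X i j l m (D.br a b)
      map_add' b c := by ext; simp
      map_smul' c b := by ext; simp }
    fun b c l m => by simpa using entPair_br_mul_right i j l m hS D a b c

theorem exists_biderivation (hS : S.IsRight) (D : DoubleBracket S) (hX : IsUniversalRep X) :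
    ∃ P : R →ₗ[k] R →ₗ[k] R, IsBiderivation P ∧
      ∀ (a b : A) (i j l m : Fin n), P (X a i j) (X b l m) = entPair X i j l m (D.br a b) := by
  choose δ hδ using fun a i j => exists_derivation_entPair_br i j hS D hX a
  have hext {δ₁ δ₂ : Derivation k R R}
      (h : ∀ (a : A) (i j : Fin n), δ₁ (X a i j) = δ₂ (X a i j)) : δ₁ = δ₂ :=
    Derivation.ext_of_adjoin_eq_top _ hX.adjoin_matrixEntries <| by
      rintro _ ⟨⟨a, i, j⟩, rfl⟩
      exact h a i j
  have hδmul (a b : A) (i j : Fin n) :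
      δ (a * b) i j = ∑ p, (X a i p • δ b p j + X b p j • δ a i p) := hext fun c l m => by
    rw [hδ, entPair_br_mul_left _ _ _ _ hS, ← Derivation.coeFnAddMonoidHom_apply, map_sum,
      Finset.sum_apply]
    simp [hδ]
  obtain ⟨Δ, hΔ⟩ := hX.exists_derivation (M := Derivation k R R)
    { toFun a := Matrix.of fun i j => δ a i j
      map_add' a b := Matrix.ext fun i j => hext fun c l m => by simp [hδ]
      map_smul' c a := Matrix.ext fun i j => hext fun b l m => by simp [hδ] }
    fun a b i j => hδmul a b i j
  refine ⟨LinearMap.mk₂ k (fun x y => Δ x y) (by simp) (by simp) (by simp) (by simp),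
    ⟨fun x y z => ?_, fun x y z => ?_⟩, fun a b i j l m => by simp [hΔ, hδ]⟩
  · simp only [LinearMap.mk₂_apply, Derivation.leibniz, smul_eq_mul]; ring
  · simp [Derivation.leibniz]

end Brackets

section Jacobiator

variable {k A R : Type*} [CommRing k] [Ring A] [Algebra k A] [CommRing R] [Algebra k R]
  {n : ℕ} (X : A →ₐ[k] Matrix (Fin n) (Fin n) R) (i j l m p q : Fin n)

/-- `(u ⊗ v) ⊗ w ↦ u_{ij} v_{lm} w_{pq}`. -/
noncomputable def entTriple : (A ⊗[k] A) ⊗[k] A →ₗ[k] R :=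
  TensorProduct.lift ((LinearMap.mul k R).compl₁₂ (entPair X i j l m)
    ((matEntry p q).comp X.toLinearMap))

theorem entTriple_tmul (d : A ⊗[k] A) (w : A) :
    entTriple X i j l m p q (d ⊗ₜ[k] w) = entPair X i j l m d * X w p q := rfl

theorem entTriple_tau123 (t : (A ⊗[k] A) ⊗[k] A) :
    entTriple X i j l m p q (tau123 k A t) = entTriple X l m p q i j t :=
  LinearMap.congr_fun (f := (entTriple X i j l m p q).comp (tau123 k A))
    (TensorProduct.ext_threefold fun u v w => by
      simp [tau123, entTriple_tmul, entPair_tmul]; ring) t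

theorem entTriple_tau132 (t : (A ⊗[k] A) ⊗[k] A) :
    entTriple X i j l m p q (tau132 k A t) = entTriple X p q i j l m t :=
  LinearMap.congr_fun (f := (entTriple X i j l m p q).comp (tau132 k A))
    (TensorProduct.ext_threefold fun u v w => by
      simp [tau132, entTriple_tmul, entPair_tmul]; ring) t

theorem entTriple_tau12 (t : (A ⊗[k] A) ⊗[k] A) :
    entTriple X i j l m p q (tau12 k A t) = entTriple X l m i j p q t :=
  LinearMap.congr_fun (f := (entTriple X i j l m p q).comp (tau12 k A))
    (TensorProduct.ext_threefold fun u v w => by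
      simp [tau12, entTriple_tmul, entPair_tmul]; ring) t

theorem entTriple_jac (br : A →ₗ[k] A →ₗ[k] A ⊗[k] A) (a b c : A) :
    entTriple X i j l m p q (jac br a b c) =
      entTriple X i j l m p q (trL br a (br b c)) + entTriple X l m p q i j (trL br b (br c a)) +
        entTriple X p q i j l m (trL br c (br a b)) := by
  rw [jac, map_add, map_add, entTriple_tau123, entTriple_tau132]

variable {X} {P : R →ₗ[k] R →ₗ[k] R} {S : BimodStr k A} {D : DoubleBracket S} {i j l m p q}

theorem IsBiderivation.apply_entPair (hP : IsBiderivation P)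
    (hPX : ∀ (a b : A) (i j l m : Fin n), P (X a i j) (X b l m) = entPair X i j l m (D.br a b))
    (a : A) (d : A ⊗[k] A) :
    P (X a i j) (entPair X l m p q d) = entTriple X i j l m p q (trL D.br a d) +
      entTriple X i j p q l m (trL D.br a (swapT k A d)) := by
  induction d using TensorProduct.induction_on with
  | zero => simp
  | tmul u v =>
    simp only [entPair_tmul, hP.leibniz_right, hPX, swapT, LinearEquiv.coe_coe,
      TensorProduct.comm_tmul, trL, TensorProduct.map_tmul, LinearMap.id_apply, entTriple_tmul]
    ring
  | add d d' hd hd' => simp only [map_add, hd, hd']; ring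

theorem IsBiderivation.jacobi_matrixEntries (hP : IsBiderivation P)
    (hPX : ∀ (a b : A) (i j l m : Fin n), P (X a i j) (X b l m) = entPair X i j l m (D.br a b))
    (hwk : ∀ a b c : A, jac D.br a b c = tau12 k A (jac D.br b a c)) (a b c : A) :
    P (X a i j) (P (X b l m) (X c p q)) + P (X b l m) (P (X c p q) (X a i j)) +
      P (X c p q) (P (X a i j) (X b l m)) = 0 := by
  have hweak :
      entTriple X i j p q l m (jac D.br a c b) = entTriple X i j l m p q (jac D.br a b c) := by
    rw [hwk, entTriple_tau12, entTriple_jac, entTriple_jac]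
    abel
  rw [entTriple_jac, entTriple_jac] at hweak
  simp only [hPX, hP.apply_entPair hPX, D.swapT_br, map_neg]
  linear_combination hweak.symm

end Jacobiator

section Traces

variable {k A R : Type*} [CommRing k] [Ring A] [Algebra k A] [CommRing R] [Algebra k R]
  {n : ℕ} {X : A →ₐ[k] Matrix (Fin n) (Fin n) R}

theorem sum_entPair_diag_mem_adjoin (d : A ⊗[k] A) :
    ∑ i, ∑ j, entPair X i i j j d ∈ Algebra.adjoin k (Set.range fun a : A => ∑ i, X a i i) := by
  induction d using TensorProduct.induction_on with
  | zero => simp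
  | tmul u v =>
    have htr : ∑ i, ∑ j, entPair X i i j j (u ⊗ₜ[k] v) = (∑ i, X u i i) * ∑ j, X v j j := by
      simp only [entPair_tmul, Finset.sum_mul_sum]
    rw [htr]
    exact mul_mem (Algebra.subset_adjoin ⟨u, rfl⟩) (Algebra.subset_adjoin ⟨v, rfl⟩)
  | add d d' hd hd' =>
    simp only [map_add, Finset.sum_add_distrib]
    exact add_mem hd hd'

theorem apply_sum_diag_mem_adjoin {S : BimodStr k A} {D : DoubleBracket S}
    {P : R →ₗ[k] R →ₗ[k] R}
    (hPX : ∀ (a b : A) (i j l m : Fin n), P (X a i j) (X b l m) = entPair X i j l m (D.br a b))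
    (a b : A) :
    P (∑ i, X a i i) (∑ j, X b j j) ∈ Algebra.adjoin k (Set.range fun a : A => ∑ i, X a i i) := by
  simp only [map_sum, LinearMap.sum_apply, hPX]
  rw [Finset.sum_comm]
  exact sum_entPair_diag_mem_adjoin _

end Traces

theorem right_weak_poisson_induces_poisson_on_rep_general
    {k A R : Type u} [Field k] [Ring A] [Algebra k A]
    [CommRing R] [Algebra k R]
    (n : ℕ)
    (S : BimodStr k A)
    (hS : ∀ (a b : A) (d : A ⊗[k] A),
      S.act a d b = ((1 : A) ⊗ₜ[k] a) * d * ((1 : A) ⊗ₜ[k] b))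
    (D : DoubleBracket S)
    (hwk : ∀ a b c : A, jac D.br a b c = tau12 k A (jac D.br b a c))
    (X : A →ₐ[k] Matrix (Fin n) (Fin n) R)
    -- `R` represents the functor `B ↦ Hom(A, Mat_n(B))`, i.e. `R = k[Rep(A,n)]`.
    (hUniv : ∀ (C : Type u) [CommRing C] [Algebra k C]
      (ρ : A →ₐ[k] Matrix (Fin n) (Fin n) C),
      ∃! g : R →ₐ[k] C, ∀ (a : A) (i j : Fin n), g (X a i j) = ρ a i j) :
    ∃ P : R →ₗ[k] R →ₗ[k] R,
      (∀ x y : R, P x y = - P y x) ∧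
      (∀ x y z : R, P x (y * z) = y * P x z + P x y * z) ∧
      (∀ x y z : R, P (x * y) z = x * P y z + y * P x z) ∧
      (∀ (a b : A) (i j l m : Fin n),
        P (X a i j) (X b l m) = entPair X i j l m (D.br a b)) ∧
      (∀ x y z : R, P x (P y z) + P y (P z x) + P z (P x y) = 0) ∧
      (∀ x ∈ Algebra.adjoin k (Set.range fun a : A => ∑ i : Fin n, X a i i),
       ∀ y ∈ Algebra.adjoin k (Set.range fun a : A => ∑ i : Fin n, X a i i),
        P x y ∈ Algebra.adjoin k (Set.range fun a : A => ∑ i : Fin n, X a i i)) ∧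
      (∀ P' : R →ₗ[k] R →ₗ[k] R,
        (∀ x y : R, P' x y = - P' y x) →
        (∀ x y z : R, P' x (y * z) = y * P' x z + P' x y * z) →
        (∀ x y z : R, P' (x * y) z = x * P' y z + y * P' x z) →
        (∀ (a b : A) (i j l m : Fin n),
          P' (X a i j) (X b l m) = entPair X i j l m (D.br a b)) →
        P' = P) := by
  obtain ⟨P, hP, hPX⟩ := exists_biderivation hS D hUniv
  have hgen := IsUniversalRep.adjoin_matrixEntries hUniv
  have hanti := hP.antisymm_of_adjoin_eq_top hgen <| by
    rintro _ ⟨⟨a, i, j⟩, rfl⟩ _ ⟨⟨b, l, m⟩, rfl⟩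
    rw [hPX, hPX, D.antisymm, map_neg, entPair_swapT]
  refine ⟨P, hanti, hP.leibniz_right, hP.leibniz_left, hPX, ?_, ?_, ?_⟩
  · refine hP.jacobi_of_adjoin_eq_top hanti hgen ?_
    rintro _ ⟨⟨a, i, j⟩, rfl⟩ _ ⟨⟨b, l, m⟩, rfl⟩ _ ⟨⟨c, p, q⟩, rfl⟩
    exact hP.jacobi_matrixEntries hPX hwk a b c
  · refine fun x hx y hy => hP.mem_adjoin ?_ hx hy
    rintro _ ⟨a, rfl⟩ _ ⟨b, rfl⟩
    exact apply_sum_diag_mem_adjoin hPX a b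
  · intro P' _ hright' hleft' hPX'
    refine IsBiderivation.ext_of_adjoin_eq_top ⟨hright', hleft'⟩ hP hgen ?_
    rintro _ ⟨⟨a, i, j⟩, rfl⟩ _ ⟨⟨b, l, m⟩, rfl⟩
    rw [hPX, hPX']

/-- Proposition `Rep-twR` and Theorem `Rep-Right-Lie`: a double
`(12)`-weak Poisson bracket associated with the right bimodule structure induces, on the
coordinate ring `k[Rep(A,n)]` (here modelled by a commutative algebra `R` with the
universal matrix representation `X` of `A`), a unique antisymmetric biderivation with
`{a_{ij}, b_{kl}} = ⟪a,b⟫'_{ij} ⟪a,b⟫''_{kl}`; it is a Poisson bracket and restricts to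
the subalgebra of trace functions. -/
theorem right_weak_poisson_induces_poisson_on_rep
    {k A R : Type u} [Field k] [CharZero k] [Ring A] [Algebra k A]
    [CommRing R] [Algebra k R]
    (hfg : ∃ s : Finset A, Algebra.adjoin k (s : Set A) = ⊤)
    (n : ℕ) (hn : 1 ≤ n)
    (S : BimodStr k A)
    (hS : ∀ (a b : A) (d : A ⊗[k] A),
      S.act a d b = ((1 : A) ⊗ₜ[k] a) * d * ((1 : A) ⊗ₜ[k] b))
    (D : DoubleBracket S)
    (hwk : ∀ a b c : A, jac D.br a b c = tau12 k A (jac D.br b a c))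
    (X : A →ₐ[k] Matrix (Fin n) (Fin n) R)
    -- `R` represents the functor `B ↦ Hom(A, Mat_n(B))`, i.e. `R = k[Rep(A,n)]`.
    (hUniv : ∀ (C : Type u) [CommRing C] [Algebra k C]
      (ρ : A →ₐ[k] Matrix (Fin n) (Fin n) C),
      ∃! g : R →ₐ[k] C, ∀ (a : A) (i j : Fin n), g (X a i j) = ρ a i j) :
    ∃ P : R →ₗ[k] R →ₗ[k] R,
      (∀ x y : R, P x y = - P y x) ∧
      (∀ x y z : R, P x (y * z) = y * P x z + P x y * z) ∧
      (∀ x y z : R, P (x * y) z = x * P y z + y * P x z) ∧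
      (∀ (a b : A) (i j l m : Fin n),
        P (X a i j) (X b l m) = entPair X i j l m (D.br a b)) ∧
      (∀ x y z : R, P x (P y z) + P y (P z x) + P z (P x y) = 0) ∧
      (∀ x ∈ Algebra.adjoin k (Set.range fun a : A => ∑ i : Fin n, X a i i),
       ∀ y ∈ Algebra.adjoin k (Set.range fun a : A => ∑ i : Fin n, X a i i),
        P x y ∈ Algebra.adjoin k (Set.range fun a : A => ∑ i : Fin n, X a i i)) ∧
      (∀ P' : R →ₗ[k] R →ₗ[k] R,
        (∀ x y : R, P' x y = - P' y x) →
        (∀ x y z : R, P' x (y * z) = y * P' x z + P' x y * z) →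
        (∀ x y z : R, P' (x * y) z = x * P' y z + y * P' x z) →
        (∀ (a b : A) (i j l m : Fin n),
          P' (X a i j) (X b l m) = entPair X i j l m (D.br a b)) →
        P' = P) :=
  right_weak_poisson_induces_poisson_on_rep_general n S hS D hwk X hUniv
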